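/- arXiv:2502.18492 — 3 statements merged into one kernel-verified Lean document; each statement's English description precedes it below -/
import Mathlib

section
/- Let 𝔤 be a finite-dimensional real Lie algebra with an inner product ⟨·,·⟩, let 𝔨 be a semisimple Lie ideal of 𝔤 with orthogonal complement 𝔪 = 𝔨^⊥, and suppose the left-invariant foliation generated by 𝔨 is conformal, i.e. there is a linear functional ρ : 𝔨 → ℝ with ⟨[V,X],Y⟩ + ⟨[V,Y],X⟩ = ρ(V)·⟨X,Y⟩ for all V ∈ 𝔨 and X,Y ∈ 𝔪. If the inner product restricted to 𝔨 is biinvariant, i.e. ⟨[W,U],V⟩ + ⟨U,[W,V]⟩ = 0 for all W,U,V ∈ 𝔨, then the foliation is totally geodesic: ⟨[X,U],V⟩ + ⟨[X,V],U⟩ = 0 for all X ∈ 𝔪 and U,V ∈ 𝔨. (Theorem 1.3, stated at the level of the Lie algebra.) -/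
/-!
For `X ∈ 𝔤`, bracketing with `X` preserves the ideal `𝔨` and restricts to a derivation of `𝔨`.
Since `𝔨` is semisimple, its Killing form is nondegenerate (Cartan's criterion), so every
derivation of `𝔨` is inner: `⁅X, ·⁆ = ⁅Z, ·⁆` on `𝔨` for some `Z ∈ 𝔨`. Biinvariance says that
`⁅Z, ·⁆` is skew for `B` on `𝔨`, which is exactly the totally geodesic condition for `X`.
-/

namespace LieIdeal

variable {R L : Type*} [CommRing R] [LieRing L] [LieAlgebra R L]

def adDerivation (I : LieIdeal R L) (x : L) : LieDerivation R I I where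
  toLinearMap := LieModule.toEnd R L I x
  leibniz' a b := by
    ext
    simp only [LieModule.toEnd_apply_apply, LieSubmodule.coe_bracket,
      LieIdeal.coe_bracket_of_module, LieSubmodule.coe_sub]
    rw [leibniz_lie, ← lie_skew (b : L)]
    abel

@[simp]
lemma coe_adDerivation_apply (I : LieIdeal R L) (x : L) (u : I) :
    ((I.adDerivation x u : I) : L) = ⁅x, (u : L)⁆ :=
  rfl

lemma exists_mem_forall_lie_eq {K : Type*} [Field K] [LieAlgebra K L] (I : LieIdeal K L)
    [FiniteDimensional K I] [LieAlgebra.IsKilling K I] (x : L) :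
    ∃ z ∈ I, ∀ u ∈ I, ⁅x, u⁆ = ⁅z, u⁆ := by
  obtain ⟨z, hz⟩ := LieDerivation.IsKilling.exists_eq_ad (I.adDerivation x)
  refine ⟨z, z.2, fun u hu => ?_⟩
  simpa using congr_arg Subtype.val (LieDerivation.congr_fun hz ⟨u, hu⟩).symm

end LieIdeal

theorem conformal_ideal_biinvariant_totally_geodesic_general
    (𝔤 : Type*) [LieRing 𝔤] [LieAlgebra ℝ 𝔤] [FiniteDimensional ℝ 𝔤]
    -- the inner product ⟨·,·⟩ on 𝔤
    (B : LinearMap.BilinForm ℝ 𝔤)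
    (hBsymm : ∀ x y : 𝔤, B x y = B y x)
    -- 𝔨 is a semisimple Lie ideal of 𝔤
    (𝔨 : LieIdeal ℝ 𝔤) (hss : LieAlgebra.IsSemisimple ℝ 𝔨)
    -- the inner product restricted to 𝔨 is biinvariant
    (hbi : ∀ W U V : 𝔤, W ∈ 𝔨 → U ∈ 𝔨 → V ∈ 𝔨 →
      B ⁅W, U⁆ V + B U ⁅W, V⁆ = 0) :
    -- the foliation is totally geodesic
    ∀ X ∈ (LieSubmodule.toSubmodule 𝔨).orthogonalBilin B,
      ∀ U ∈ 𝔨, ∀ V ∈ 𝔨, B ⁅X, U⁆ V + B ⁅X, V⁆ U = 0 := by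
  intro X _ U hU V hV
  obtain ⟨Z, hZ, hXZ⟩ := 𝔨.exists_mem_forall_lie_eq X
  rw [hXZ U hU, hXZ V hV, hBsymm ⁅Z, V⁆ U]
  exact hbi Z U V hZ hU hV

/-- **Theorem 1.3** (at the level of the Lie algebra).
Let `𝔤` be a finite-dimensional real Lie algebra with an inner product (represented
faithfully as a symmetric positive-definite bilinear form `B`), let `𝔨` be a semisimple
Lie ideal of `𝔤` with orthogonal complement `𝔪 = 𝔨ᗮ`, and suppose the left-invariant
foliation generated by `𝔨` is conformal with conformality functional `ρ`.  If the inner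
product restricted to `𝔨` is biinvariant, then the foliation is totally geodesic:
`⟨[X,U],V⟩ + ⟨[X,V],U⟩ = 0` for all `X ∈ 𝔪` and `U, V ∈ 𝔨`. -/
theorem conformal_ideal_biinvariant_totally_geodesic
    (𝔤 : Type*) [LieRing 𝔤] [LieAlgebra ℝ 𝔤] [FiniteDimensional ℝ 𝔤]
    -- the inner product ⟨·,·⟩ on 𝔤
    (B : LinearMap.BilinForm ℝ 𝔤)
    (hBsymm : ∀ x y : 𝔤, B x y = B y x)
    (hBpos : ∀ x : 𝔤, x ≠ 0 → 0 < B x x)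
    -- 𝔨 is a semisimple Lie ideal of 𝔤
    (𝔨 : LieIdeal ℝ 𝔤) (hss : LieAlgebra.IsSemisimple ℝ 𝔨)
    -- the foliation generated by 𝔨 is conformal with conformality functional ρ
    (ρ : 𝔨 →ₗ[ℝ] ℝ)
    (hconf : ∀ V : 𝔨, ∀ X Y : 𝔤,
      X ∈ (LieSubmodule.toSubmodule 𝔨).orthogonalBilin B →
      Y ∈ (LieSubmodule.toSubmodule 𝔨).orthogonalBilin B →
      B ⁅(V : 𝔤), X⁆ Y + B ⁅(V : 𝔤), Y⁆ X = ρ V * B X Y)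
    -- the inner product restricted to 𝔨 is biinvariant
    (hbi : ∀ W U V : 𝔤, W ∈ 𝔨 → U ∈ 𝔨 → V ∈ 𝔨 →
      B ⁅W, U⁆ V + B U ⁅W, V⁆ = 0) :
    -- the foliation is totally geodesic
    ∀ X ∈ (LieSubmodule.toSubmodule 𝔨).orthogonalBilin B,
      ∀ U ∈ 𝔨, ∀ V ∈ 𝔨, B ⁅X, U⁆ V + B ⁅X, V⁆ U = 0 :=
  conformal_ideal_biinvariant_totally_geodesic_general 𝔤 B hBsymm 𝔨 hss hbi
end

section
/- Let 𝔤 be a finite-dimensional real Lie algebra with an inner product ⟨·,·⟩ and let 𝔨 be a semisimple Lie ideal of 𝔤. Let B denote the Killing form of 𝔨 and let θ : 𝔨 → 𝔨 be an involutive Lie algebra automorphism of 𝔨 such that (V,W) ↦ −B(V,θ(W)) is positive definite (a Cartan involution). Suppose the inner product of 𝔤 restricted to 𝔨 equals the Cartan–Killing metric, i.e. ⟨V,W⟩ = −B(V,θ(W)) for all V,W ∈ 𝔨. Then for every X ∈ 𝔤 and every V ∈ 𝔨 with θ(V) = V or θ(V) = −V one has ⟨[X,V],V⟩ = 0; in particular,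 for every X ∈ 𝔨^⊥ the trace of ad_X restricted to 𝔨 vanishes, so the foliation generated by 𝔨 is minimal. (Proposition 5.1, stated at the level of the Lie algebra.) -/
/-!
Since `𝔨` is a semisimple ideal, `ad X` restricts to a derivation of `𝔨`, and every derivation of
a semisimple Lie algebra is inner: `ad X|𝔨 = ad Y` for some `Y ∈ 𝔨`. Invariance of the Killing
form then gives `⟨[X,V],V⟩ = -B([Y,V], ±V) = ∓B(Y,[V,V]) = 0`, and the trace of `ad X|𝔨 = ad Y`
vanishes because a semisimple Lie algebra is perfect.
-/

theorem LieModule.traceForm_lie_apply_self {R L M : Type*} [CommRing R] [LieRing L]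
    [LieAlgebra R L] [AddCommGroup M] [Module R M] [LieRingModule L M] [LieModule R L M]
    (x y : L) : traceForm R L M ⁅x, y⁆ y = 0 := by
  rw [traceForm_apply_lie_apply, lie_self, map_zero]

namespace LieAlgebra.IsSemisimple

variable {R L : Type*} [CommRing R] [LieRing L] [LieAlgebra R L] [IsSemisimple R L]

theorem lie_top_top_eq_top : ⁅(⊤ : LieIdeal R L), (⊤ : LieIdeal R L)⁆ = ⊤ := by
  set J : LieIdeal R L := ⁅(⊤ : LieIdeal R L), (⊤ : LieIdeal R L)⁆
  -- `⁅Jᶜ, Jᶜ⁆` lies in both `J` and `Jᶜ`, so the ideal `Jᶜ` is abelian.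
  have hJc : IsLieAbelian (Jᶜ : LieIdeal R L) := by
    rw [LieSubmodule.lie_abelian_iff_lie_self_eq_bot, ← le_bot_iff, ← inf_compl_eq_bot (a := J)]
    exact le_inf (LieSubmodule.mono_lie le_top le_top) (LieSubmodule.lie_le_right _ _)
  rw [← compl_eq_bot]
  exact (hasTrivialRadical_iff_no_abelian_ideals R L).mp inferInstance _ hJc

theorem trace_ad_eq_zero [Module.Free R L] [Module.Finite R L] (x : L) :
    LinearMap.trace R L (ad R L x) = 0 := by
  refine LieModule.trace_toEnd_eq_zero_of_mem_lcs R L L (k := 1) le_rfl ?_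
  rw [LieModule.lowerCentralSeries_succ, LieModule.lowerCentralSeries_zero, lie_top_top_eq_top]
  exact LieSubmodule.mem_top x

end LieAlgebra.IsSemisimple

namespace LieIdeal

open LieAlgebra

variable {R L : Type*} [CommRing R] [LieRing L] [LieAlgebra R L] (I : LieIdeal R L)

def adRestrict (x : L) : LieDerivation R I I where
  toLinearMap := (ad R L x).restrict (p := LieSubmodule.toSubmodule I)
    (q := LieSubmodule.toSubmodule I) (fun _ hv => I.lie_mem hv)
  leibniz' a b := Subtype.ext <| by
    change ⁅x, ⁅(a : L), (b : L)⁆⁆ = ⁅(a : L), ⁅x, (b : L)⁆⁆ - ⁅(b : L), ⁅x, (a : L)⁆⁆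
    rw [leibniz_lie, ← lie_skew (b : L)]
    abel

theorem exists_ad_restrict_eq_ad {R L : Type*} [Field R] [LieRing L] [LieAlgebra R L]
    (I : LieIdeal R L) [Module.Finite R I] [IsKilling R I] (x : L) :
    ∃ y : I, (ad R L x).restrict (p := LieSubmodule.toSubmodule I)
      (q := LieSubmodule.toSubmodule I) (fun _ hv => I.lie_mem hv) = ad R I y := by
  obtain ⟨y, hy⟩ := LieDerivation.IsKilling.exists_eq_ad (I.adRestrict x)
  exact ⟨y, by rw [← LieDerivation.coe_ad_apply_eq_ad_apply y, hy]; rfl⟩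

end LieIdeal

theorem cartan_killing_metric_minimal_general
    (𝔤 : Type*) [LieRing 𝔤] [LieAlgebra ℝ 𝔤] [FiniteDimensional ℝ 𝔤]
    -- the inner product ⟨·,·⟩ on 𝔤
    (B𝔤 : LinearMap.BilinForm ℝ 𝔤)
    -- 𝔨 is a semisimple Lie ideal of 𝔤
    (𝔨 : LieIdeal ℝ 𝔤) (hss : LieAlgebra.IsSemisimple ℝ 𝔨)
    -- θ is a Cartan involution of 𝔨
    (θ : 𝔨 ≃ₗ⁅ℝ⁆ 𝔨)
    -- the inner product restricted to 𝔨 is the Cartan--Killing metric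
    (hCK : ∀ V W : 𝔨, B𝔤 (V : 𝔤) (W : 𝔤) = -(killingForm ℝ 𝔨 V (θ W))) :
    -- ⟨[X,V],V⟩ = 0 whenever θ(V) = ±V ...
    (∀ X : 𝔤, ∀ V : 𝔨, (θ V = V ∨ θ V = -V) → B𝔤 ⁅X, (V : 𝔤)⁆ (V : 𝔤) = 0) ∧
    -- ... and in particular the foliation generated by 𝔨 is minimal
    (∀ X ∈ (LieSubmodule.toSubmodule 𝔨).orthogonalBilin B𝔤,
      LinearMap.trace ℝ ↥(LieSubmodule.toSubmodule 𝔨)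
        ((LieAlgebra.ad ℝ 𝔤 X).restrict
          (p := LieSubmodule.toSubmodule 𝔨) (q := LieSubmodule.toSubmodule 𝔨)
          (fun _ hv => 𝔨.lie_mem hv)) = 0) := by
  refine ⟨fun X V hV => ?_, fun X _ => ?_⟩
  · obtain ⟨Y, hY⟩ := 𝔨.exists_ad_restrict_eq_ad X
    have hXV : ⁅X, (V : 𝔤)⁆ = ((⁅Y, V⁆ : 𝔨) : 𝔤) :=
      congrArg Subtype.val (LinearMap.congr_fun hY V)
    rw [hXV, hCK]
    rcases hV with h | h <;> simp only [h, map_neg, neg_neg, neg_eq_zero] <;>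
      exact LieModule.traceForm_lie_apply_self Y V
  · obtain ⟨Y, hY⟩ := 𝔨.exists_ad_restrict_eq_ad X
    rw [hY]
    exact LieAlgebra.IsSemisimple.trace_ad_eq_zero Y

/-- **Proposition 5.1** (at the level of the Lie algebra).
Let `𝔤` be a finite-dimensional real Lie algebra with an inner product (represented
faithfully as a symmetric positive-definite bilinear form `B𝔤`) and let `𝔨` be a
semisimple Lie ideal of `𝔤`.  Let `B` be the Killing form of `𝔨` and `θ` a Cartan
involution of `𝔨`, i.e. an involutive Lie algebra automorphism such that
`(V,W) ↦ -B(V,θ(W))` is positive definite.  If the inner product of `𝔤` restricted to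
`𝔨` equals the Cartan--Killing metric `(V,W) ↦ -B(V,θ(W))`, then for every `X ∈ 𝔤` and
every `V ∈ 𝔨` with `θ(V) = V` or `θ(V) = -V` one has `⟨[X,V],V⟩ = 0`; in particular,
for every `X ∈ 𝔨ᗮ` the trace of `ad_X` restricted to `𝔨` vanishes, so the foliation
generated by `𝔨` is minimal. -/
theorem cartan_killing_metric_minimal
    (𝔤 : Type*) [LieRing 𝔤] [LieAlgebra ℝ 𝔤] [FiniteDimensional ℝ 𝔤]
    -- the inner product ⟨·,·⟩ on 𝔤
    (B𝔤 : LinearMap.BilinForm ℝ 𝔤)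
    (hBsymm : ∀ x y : 𝔤, B𝔤 x y = B𝔤 y x)
    (hBpos : ∀ x : 𝔤, x ≠ 0 → 0 < B𝔤 x x)
    -- 𝔨 is a semisimple Lie ideal of 𝔤
    (𝔨 : LieIdeal ℝ 𝔤) (hss : LieAlgebra.IsSemisimple ℝ 𝔨)
    -- θ is a Cartan involution of 𝔨
    (θ : 𝔨 ≃ₗ⁅ℝ⁆ 𝔨)
    (hinv : ∀ V : 𝔨, θ (θ V) = V)
    (hposdef : ∀ V : 𝔨, V ≠ 0 → 0 < -(killingForm ℝ 𝔨 V (θ V)))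
    -- the inner product restricted to 𝔨 is the Cartan--Killing metric
    (hCK : ∀ V W : 𝔨, B𝔤 (V : 𝔤) (W : 𝔤) = -(killingForm ℝ 𝔨 V (θ W))) :
    -- ⟨[X,V],V⟩ = 0 whenever θ(V) = ±V ...
    (∀ X : 𝔤, ∀ V : 𝔨, (θ V = V ∨ θ V = -V) → B𝔤 ⁅X, (V : 𝔤)⁆ (V : 𝔤) = 0) ∧
    -- ... and in particular the foliation generated by 𝔨 is minimal
    (∀ X ∈ (LieSubmodule.toSubmodule 𝔨).orthogonalBilin B𝔤,
      LinearMap.trace ℝ ↥(LieSubmodule.toSubmodule 𝔨)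
        ((LieAlgebra.ad ℝ 𝔤 X).restrict
          (p := LieSubmodule.toSubmodule 𝔨) (q := LieSubmodule.toSubmodule 𝔨)
          (fun _ hv => 𝔨.lie_mem hv)) = 0) :=
  cartan_killing_metric_minimal_general 𝔤 B𝔤 𝔨 hss θ hCK
end

section
/- Let 𝔤 be a finite-dimensional real Lie algebra with an inner product ⟨·,·⟩ and let 𝔨 be a semisimple Lie subalgebra of 𝔤 whose orthogonal complement 𝔪 = 𝔨^⊥ has dimension 3. Suppose there is a linear functional ρ : 𝔨 → ℝ with ⟨[V,X],Y⟩ + ⟨[V,Y],X⟩ = ρ(V)·⟨X,Y⟩ for all V ∈ 𝔨 and X,Y ∈ 𝔪 (the foliation generated by 𝔨 is conformal). If 𝔤 is not perfect, i.e. [𝔤,𝔤] ≠ 𝔤, then 𝔨 is a Lie ideal of 𝔤, i.e. [𝔤,𝔨] ⊆ 𝔨. (Proposition 6.2, stated at the level of the Lie algebra.) -/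
/-!
Split `𝔤 = 𝔨 ⊕ 𝔪` and let `𝔨` act on `𝔪 ≅ 𝔤/𝔨` by `V ↦ pr_𝔪 ∘ ad V`. Conformality says that
each of these operators is conformal on `𝔪` with factor `ρ V`. A commutator of conformal
operators is skew, so `ρ` vanishes on `[𝔨, 𝔨] = 𝔨` and `𝔨` acts on `𝔪` by skew operators.
If their images span `𝔪`, then `𝔪 ⊆ [𝔤, 𝔤]`, and since also `𝔨 = [𝔨, 𝔨] ⊆ [𝔤, 𝔤]`, the
algebra `𝔤` is perfect. Otherwise, as `dim 𝔪 = 3`, the images lie in a common plane, and skew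
operators with values in a common plane commute; a perfect Lie algebra has no nonzero
representation by commuting operators, so `[𝔨, 𝔪] ⊆ 𝔨`.
-/

open Module

namespace LieAlgebra

variable (R L : Type*) [CommRing R] [LieRing L] [LieAlgebra R L]

def IsPerfect : Prop := ⁅(⊤ : LieIdeal R L), (⊤ : LieIdeal R L)⁆ = ⊤

variable {R L}

theorem IsSemisimple.isPerfect [IsSemisimple R L] : IsPerfect R L := by
  set D := ⁅(⊤ : LieIdeal R L), (⊤ : LieIdeal R L)⁆
  have hDc : IsLieAbelian (Dᶜ : LieIdeal R L) := by
    rw [LieSubmodule.lie_abelian_iff_lie_self_eq_bot, ← le_bot_iff, ← inf_compl_self D]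
    exact le_inf (LieSubmodule.mono_lie le_top le_top) (LieSubmodule.lie_le_right _ _)
  exact compl_eq_bot.mp ((hasTrivialRadical_iff_no_abelian_ideals R L).mp inferInstance _ hDc)

namespace IsPerfect

theorem submodule_eq_top (h : IsPerfect R L) {S : Submodule R L}
    (hS : ∀ x y : L, ⁅x, y⁆ ∈ S) : S = ⊤ := by
  refine eq_top_iff.mpr fun x _ ↦ ?_
  have hx : x ∈ (⁅(⊤ : LieIdeal R L), (⊤ : LieIdeal R L)⁆ : LieIdeal R L).toSubmodule := by
    rw [h]; exact LieSubmodule.mem_top x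
  rw [LieSubmodule.lieIdeal_oper_eq_linear_span'] at hx
  refine Submodule.span_le.mpr ?_ hx
  rintro _ ⟨x, -, y, -, rfl⟩
  exact hS x y

theorem linearMap_eq_zero (h : IsPerfect R L) {M : Type*} [AddCommGroup M] [Module R M]
    {f : L →ₗ[R] M} (hf : ∀ x y : L, f ⁅x, y⁆ = 0) : f = 0 :=
  LinearMap.ker_eq_top.mp (h.submodule_eq_top hf)

theorem lieHom_apply_mem_lie_top (h : IsPerfect R L) {L' : Type*} [LieRing L']
    [LieAlgebra R L'] (f : L →ₗ⁅R⁆ L') (x : L) :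
    f x ∈ ⁅(⊤ : LieIdeal R L'), (⊤ : LieIdeal R L')⁆ := by
  have := h.submodule_eq_top
    (S := (⁅(⊤ : LieIdeal R L'), (⊤ : LieIdeal R L')⁆ : LieIdeal R L').toSubmodule.comap
      f.toLinearMap)
    fun x y ↦ by
      simpa using LieSubmodule.lie_mem_lie (LieSubmodule.mem_top (f x)) (LieSubmodule.mem_top (f y))
  exact this.ge (Submodule.mem_top (x := x))

end IsPerfect

end LieAlgebra

theorem Submodule.exists_le_span_pair {K E : Type*} [Field K] [AddCommGroup E] [Module K E]
    (W : Submodule K E) [FiniteDimensional K W] (hW : finrank K W ≤ 2) :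
    ∃ e₀ ∈ W, ∃ e₁ ∈ W, W ≤ span K {e₀, e₁} := by
  obtain ⟨n, hn, ⟨b⟩⟩ : ∃ n ≤ 2, Nonempty (Basis (Fin n) K W) := ⟨_, hW, ⟨Module.finBasis K W⟩⟩
  have hWb : W = span K (Set.range fun i ↦ (b i : E)) := by
    have := congrArg (map W.subtype) b.span_eq
    rw [Submodule.map_span, map_subtype_top, ← Set.range_comp] at this
    exact this.symm
  interval_cases n
  · exact ⟨0, W.zero_mem, 0, W.zero_mem, hWb.le.trans (span_mono (by simp))⟩
  · refine ⟨b 0, (b 0).2, 0, W.zero_mem, hWb.le.trans (span_mono ?_)⟩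
    rintro _ ⟨i, rfl⟩; fin_cases i; simp
  · refine ⟨b 0, (b 0).2, b 1, (b 1).2, hWb.le.trans (span_mono ?_)⟩
    rintro _ ⟨i, rfl⟩; fin_cases i <;> simp

theorem LinearMap.BilinForm.isCompl_orthogonalBilin {K E : Type*} [Field K] [AddCommGroup E]
    [Module K E] [FiniteDimensional K E] {B : LinearMap.BilinForm K E}
    (hBsymm : ∀ x y, B x y = B y x) (hB : ∀ x, B x x = 0 → x = 0) (W : Submodule K E) :
    IsCompl W (W.orthogonalBilin B) :=
  isCompl_orthogonal_of_restrict_nondegenerate (fun x y h ↦ (hBsymm x y).symm.trans h)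
    ⟨fun x hx ↦ Subtype.ext (hB _ (hx x)), fun x hx ↦ Subtype.ext (hB _ (hx x))⟩

section CompressedRep

variable {R L E : Type*} [CommRing R] [LieRing L] [AddCommGroup E] [Module R E]
  [LieRingModule L E] (N : LieSubmodule R L E) {P : Submodule R E}
  (hNP : IsCompl N.toSubmodule P)

namespace LieSubmodule

theorem projection_lie_projection (x : L) (v : E) :
    P.projection N hNP.symm ⁅x, P.projection N hNP.symm v⁆ = P.projection N hNP.symm ⁅x, v⁆ := by
  have hv : v - P.projection N hNP.symm v ∈ N := by
    rw [← Submodule.projection_eq_self_sub_projection hNP.symm]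
    exact Submodule.projection_apply_mem _ _
  refine (sub_eq_zero.mp ?_).symm
  rw [← map_sub, ← lie_sub]
  exact Submodule.projection_apply_of_mem_right _ (N.lie_mem hv)

variable [LieAlgebra R L] [LieModule R L E]

/-- The quotient representation of `L` on `E ⧸ N`, transported to the complement `P`. -/
noncomputable def compressedRep : L →ₗ[R] Module.End R E where
  toFun x := P.projection N hNP.symm ∘ₗ LieModule.toEnd R L E x
  map_add' x y := by simp only [map_add, LinearMap.comp_add]
  map_smul' t x := by simp only [map_smul, LinearMap.comp_smul, RingHom.id_apply]

theorem compressedRep_apply (x : L) (v : E) :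
    N.compressedRep hNP x v = P.projection N hNP.symm ⁅x, v⁆ := rfl

theorem compressedRep_apply_mem (x : L) (v : E) : N.compressedRep hNP x v ∈ P :=
  Submodule.projection_apply_mem _ _

theorem compressedRep_apply_projection (x : L) (v : E) :
    N.compressedRep hNP x (P.projection N hNP.symm v) = N.compressedRep hNP x v :=
  projection_lie_projection N hNP x v

theorem iSup_range_compressedRep_le :
    ⨆ x : L, LinearMap.range (N.compressedRep hNP x) ≤ P :=
  iSup_le fun x ↦ by rintro _ ⟨v, rfl⟩; exact N.compressedRep_apply_mem hNP x v

theorem compressedRep_lie (x y : L) :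
    N.compressedRep hNP ⁅x, y⁆ =
      N.compressedRep hNP x * N.compressedRep hNP y -
        N.compressedRep hNP y * N.compressedRep hNP x := by
  ext v
  simp only [compressedRep_apply, Module.End.mul_apply, LinearMap.sub_apply, lie_lie, map_sub]
  rw [projection_lie_projection N hNP x, projection_lie_projection N hNP y]

end LieSubmodule

end CompressedRep

def IsConformalOn {R E : Type*} [CommRing R] [AddCommGroup E] [Module R E]
    (B : LinearMap.BilinForm R E) (M : Submodule R E) (c : R) (S : Module.End R E) : Prop :=
  ∀ x ∈ M, ∀ y ∈ M, B (S x) y + B (S y) x = c * B x y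

namespace IsConformalOn

section CommRing

variable {R E : Type*} [CommRing R] [AddCommGroup E] [Module R E]
  {B : LinearMap.BilinForm R E} {M : Submodule R E} {S T : Module.End R E} {a b : R}

theorem commutator (hB : ∀ x y, B x y = B y x) (hS : IsConformalOn B M a S)
    (hT : IsConformalOn B M b T) (hSM : ∀ x ∈ M, S x ∈ M) (hTM : ∀ x ∈ M, T x ∈ M) :
    IsConformalOn B M 0 (S * T - T * S) := by
  intro x hx y hy
  simp only [LinearMap.sub_apply, Module.End.mul_apply, map_sub, zero_mul]
  linear_combination hS _ (hTM x hx) y hy + hS x hx _ (hTM y hy) - hT _ (hSM x hx) y hy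
    - hT x hx _ (hSM y hy) + a * hT x hx y hy - b * hS x hx y hy - hB (S y) (T x)
    - hB (S x) (T y) + a * hB x (T y) - b * hB x (S y)

theorem smul_sub_smul (hS : IsConformalOn B M 0 S) (hT : IsConformalOn B M 0 T) (c d : R) :
    IsConformalOn B M 0 (c • S - d • T) := by
  intro x hx y hy
  simp only [LinearMap.sub_apply, LinearMap.smul_apply, map_sub, map_smul, smul_eq_mul,
    zero_mul]
  linear_combination c * hS x hx y hy - d * hT x hx y hy

theorem projection_comp {N : Submodule R E} (hcompl : IsCompl N M)
    (horth : ∀ n ∈ N, ∀ y ∈ M, B n y = 0) (hS : IsConformalOn B M a S) :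
    IsConformalOn B M a (M.projection N hcompl.symm ∘ₗ S) := by
  have hproj : ∀ z, ∀ y ∈ M, B (M.projection N hcompl.symm z) y = B z y := by
    intro z y hy
    rw [eq_comm, ← sub_eq_zero, ← LinearMap.sub_apply, ← map_sub,
      ← Submodule.projection_eq_self_sub_projection hcompl.symm]
    exact horth _ (Submodule.projection_apply_mem _ _) y hy
  intro x hx y hy
  rw [LinearMap.comp_apply, LinearMap.comp_apply, hproj _ y hy, hproj _ x hx]
  exact hS x hx y hy

end CommRing

section Field

variable {K E : Type*} [Field K] [AddCommGroup E] [Module K E]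
  {B : LinearMap.BilinForm K E} {M : Submodule K E} {S T : Module.End K E} {a b : K}

theorem eq_of_ne_bot (hB : ∀ x, B x x = 0 → x = 0) (hM : M ≠ ⊥)
    (ha : IsConformalOn B M a S) (hb : IsConformalOn B M b S) : a = b := by
  obtain ⟨x, hx, hx0⟩ := M.ne_bot_iff.mp hM
  have hxx : B x x ≠ 0 := fun h ↦ hx0 (hB x h)
  exact mul_right_cancel₀ hxx ((ha x hx x hx).symm.trans (hb x hx x hx))

theorem apply_self [NeZero (2 : K)] (hS : IsConformalOn B M 0 S) {x : E} (hx : x ∈ M) :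
    B (S x) x = 0 := by
  have h := hS x hx x hx
  rw [zero_mul, ← two_mul] at h
  exact (mul_eq_zero.mp h).resolve_left two_ne_zero

theorem eq_zero_of_apply_apply_eq_zero (hB : ∀ x, B x x = 0 → x = 0)
    (hS : IsConformalOn B M 0 S) {x : E} (hx : x ∈ M) (hSx : S x ∈ M) (hSSx : S (S x) = 0) :
    S x = 0 := by
  have h := hS x hx (S x) hSx
  rw [hSSx, map_zero, LinearMap.zero_apply, add_zero, zero_mul] at h
  exact hB _ h

theorem eq_zero_of_range_le_span_pair [NeZero (2 : K)] (hB : ∀ x, B x x = 0 → x = 0)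
    (hS : IsConformalOn B M 0 S) {e₀ e₁ : E} (he₀ : e₀ ∈ M) (he₁ : e₁ ∈ M)
    (hrange : LinearMap.range S ≤ Submodule.span K {e₀, e₁}) (h₀₁ : B (S e₀) e₁ = 0) :
    ∀ x ∈ M, S x = 0 := by
  have hspan : Submodule.span K {e₀, e₁} ≤ M := by
    rw [Submodule.span_le]; exact Set.insert_subset he₀ (Set.singleton_subset_iff.mpr he₁)
  have hval : ∀ z ∈ Submodule.span K {e₀, e₁}, B z e₀ = 0 → B z e₁ = 0 → z = 0 := by
    intro z hz hz₀ hz₁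
    have hker : Submodule.span K {e₀, e₁} ≤ LinearMap.ker (B z) := by
      rw [Submodule.span_le]
      exact Set.insert_subset hz₀ (Set.singleton_subset_iff.mpr hz₁)
    exact hB z (hker hz)
  have hSe₀ : S e₀ = 0 := hval _ (hrange ⟨e₀, rfl⟩) (hS.apply_self he₀) h₀₁
  have hSe₁ : S e₁ = 0 := by
    refine hval _ (hrange ⟨e₁, rfl⟩) ?_ (hS.apply_self he₁)
    simpa [h₀₁] using hS e₀ he₀ e₁ he₁
  have hSspan : Submodule.span K {e₀, e₁} ≤ LinearMap.ker S := by
    rw [Submodule.span_le]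
    exact Set.insert_subset hSe₀ (Set.singleton_subset_iff.mpr hSe₁)
  intro x hx
  have hSx := hrange ⟨x, rfl⟩
  exact hS.eq_zero_of_apply_apply_eq_zero hB hx (hspan hSx) (hSspan hSx)

theorem commute_of_range_le_span_pair [NeZero (2 : K)] (hB : ∀ x, B x x = 0 → x = 0)
    (hS : IsConformalOn B M 0 S) (hT : IsConformalOn B M 0 T) {e₀ e₁ : E} (he₀ : e₀ ∈ M)
    (he₁ : e₁ ∈ M) (hSrange : LinearMap.range S ≤ Submodule.span K {e₀, e₁})
    (hTrange : LinearMap.range T ≤ Submodule.span K {e₀, e₁}) {x : E} (hx : x ∈ M) :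
    S (T x) = T (S x) := by
  have hspan : Submodule.span K {e₀, e₁} ≤ M := by
    rw [Submodule.span_le]; exact Set.insert_subset he₀ (Set.singleton_subset_iff.mpr he₁)
  by_cases hT0 : B (T e₀) e₁ = 0
  · have hTx := hT.eq_zero_of_range_le_span_pair hB he₀ he₁ hTrange hT0
    rw [hTx x hx, map_zero, hTx _ (hspan (hSrange ⟨x, rfl⟩))]
  -- the skew operator `B (T e₀) e₁ • S - B (S e₀) e₁ • T` pairs `e₀` with `e₁` to zero,
  -- so it vanishes on `M`
  have hprop : ∀ y ∈ M, B (T e₀) e₁ • S y = B (S e₀) e₁ • T y := by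
    intro y hy
    have := (hS.smul_sub_smul hT (B (T e₀) e₁) (B (S e₀) e₁)).eq_zero_of_range_le_span_pair hB
      he₀ he₁ ?_ (by simp [mul_comm]) y hy
    · simpa [sub_eq_zero] using this
    rintro _ ⟨z, rfl⟩
    exact sub_mem (Submodule.smul_mem _ _ (hSrange ⟨z, rfl⟩))
      (Submodule.smul_mem _ _ (hTrange ⟨z, rfl⟩))
  refine smul_right_injective E hT0 ?_
  calc B (T e₀) e₁ • S (T x) = B (S e₀) e₁ • T (T x) := hprop _ (hspan (hTrange ⟨x, rfl⟩))
    _ = T (B (T e₀) e₁ • S x) := by rw [hprop x hx, map_smul]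
    _ = B (T e₀) e₁ • T (S x) := map_smul T _ (S x)

end Field

end IsConformalOn

open LieAlgebra

namespace LieSubalgebra

section CommRing

variable {R 𝔤 : Type*} [CommRing R] [LieRing 𝔤] [LieAlgebra R 𝔤] {𝔨 : LieSubalgebra R 𝔤}
  {P : Submodule R 𝔤} (hP : IsCompl (𝔨.toLieSubmodule : Submodule R 𝔤) P)

theorem lie_mem_of_compressedRep_eq_zero (hr : 𝔨.toLieSubmodule.compressedRep hP = 0) (X : 𝔤)
    {V : 𝔤} (hV : V ∈ 𝔨) : ⁅X, V⁆ ∈ 𝔨 := by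
  have h := LinearMap.congr_fun (LinearMap.congr_fun hr ⟨V, hV⟩) X
  rw [LieSubmodule.compressedRep_apply, LinearMap.zero_apply, LinearMap.zero_apply,
    Submodule.projection_apply_eq_zero_iff] at h
  rw [← lie_skew]
  exact neg_mem h

theorem isPerfect_of_le_iSup_range_compressedRep (h𝔨 : IsPerfect R 𝔨)
    (hrange : P ≤ ⨆ V : 𝔨, LinearMap.range (𝔨.toLieSubmodule.compressedRep hP V)) :
    IsPerfect R 𝔤 := by
  set D := (⁅(⊤ : LieIdeal R 𝔤), (⊤ : LieIdeal R 𝔤)⁆ : LieIdeal R 𝔤).toSubmodule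
  have h𝔨D : 𝔨.toSubmodule ≤ D := fun V hV ↦ h𝔨.lieHom_apply_mem_lie_top 𝔨.incl ⟨V, hV⟩
  have hrD : ∀ V : 𝔨, LinearMap.range (𝔨.toLieSubmodule.compressedRep hP V) ≤ D := by
    rintro V _ ⟨X, rfl⟩
    rw [LieSubmodule.compressedRep_apply, Submodule.projection_eq_self_sub_projection hP]
    exact sub_mem (LieSubmodule.lie_mem_lie (LieSubmodule.mem_top _) (LieSubmodule.mem_top _))
      (h𝔨D (Submodule.projection_apply_mem _ _))
  rw [IsPerfect, ← LieSubmodule.toSubmodule_eq_top, eq_top_iff, ← hP.sup_eq_top]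
  exact sup_le h𝔨D (hrange.trans (iSup_le hrD))

end CommRing

section Field

variable {K 𝔤 : Type*} [Field K] [LieRing 𝔤] [LieAlgebra K 𝔤] {B : LinearMap.BilinForm K 𝔤}
  {𝔨 : LieSubalgebra K 𝔤} {P : Submodule K 𝔤} (hP : IsCompl (𝔨.toLieSubmodule : Submodule K 𝔤) P)

theorem eq_zero_of_isConformalOn_compressedRep (hBsymm : ∀ x y, B x y = B y x)
    (hB : ∀ x, B x x = 0 → x = 0) (hPne : P ≠ ⊥) (h𝔨 : IsPerfect K 𝔨) {ρ : 𝔨 →ₗ[K] K}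
    (hρ : ∀ V, IsConformalOn B P (ρ V) (𝔨.toLieSubmodule.compressedRep hP V)) : ρ = 0 := by
  have hPinv : ∀ V, ∀ x ∈ P, 𝔨.toLieSubmodule.compressedRep hP V x ∈ P :=
    fun V x _ ↦ LieSubmodule.compressedRep_apply_mem _ hP V x
  refine h𝔨.linearMap_eq_zero fun V W ↦ ?_
  have hskew := (hρ V).commutator hBsymm (hρ W) (hPinv V) (hPinv W)
  rw [← LieSubmodule.compressedRep_lie] at hskew
  exact (hρ ⁅V, W⁆).eq_of_ne_bot hB hPne hskew

theorem compressedRep_eq_zero_of_finrank_le_two [NeZero (2 : K)] [FiniteDimensional K 𝔤]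
    (hB : ∀ x, B x x = 0 → x = 0) (h𝔨 : IsPerfect K 𝔨)
    (hskew : ∀ V, IsConformalOn B P 0 (𝔨.toLieSubmodule.compressedRep hP V))
    (hrank : finrank K ↥(⨆ V : 𝔨, LinearMap.range (𝔨.toLieSubmodule.compressedRep hP V)) ≤ 2) :
    𝔨.toLieSubmodule.compressedRep hP = 0 := by
  obtain ⟨e₀, he₀, e₁, he₁, hspan⟩ := Submodule.exists_le_span_pair _ hrank
  have hWP := LieSubmodule.iSup_range_compressedRep_le _ hP
  have hrange : ∀ V, LinearMap.range (𝔨.toLieSubmodule.compressedRep hP V) ≤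
      Submodule.span K {e₀, e₁} := fun V ↦ (le_iSup (fun V ↦ LinearMap.range _) V).trans hspan
  refine h𝔨.linearMap_eq_zero fun V W ↦ ?_
  rw [LieSubmodule.compressedRep_lie, sub_eq_zero]
  ext X
  rw [Module.End.mul_apply, Module.End.mul_apply,
    ← LieSubmodule.compressedRep_apply_projection _ hP W X,
    ← LieSubmodule.compressedRep_apply_projection _ hP V X]
  exact (hskew V).commute_of_range_le_span_pair hB (hskew W) (hWP he₀) (hWP he₁) (hrange V)
    (hrange W) (Submodule.projection_apply_mem _ _)

end Field

end LieSubalgebra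

/-- **Proposition 6.2** (at the level of the Lie algebra).
Let `𝔤` be a finite-dimensional real Lie algebra with an inner product (represented
faithfully as a symmetric positive-definite bilinear form `B`) and let `𝔨` be a
semisimple Lie subalgebra of `𝔤` whose orthogonal complement `𝔪 = 𝔨ᗮ` has dimension
three.  Suppose the foliation generated by `𝔨` is conformal with conformality
functional `ρ`.  If `𝔤` is not perfect, i.e. `[𝔤,𝔤] ≠ 𝔤`, then `𝔨` is a Lie ideal of
`𝔤`, i.e. `[𝔤,𝔨] ⊆ 𝔨`. -/
theorem codim_three_not_perfect_implies_normal
    (𝔤 : Type*) [LieRing 𝔤] [LieAlgebra ℝ 𝔤] [FiniteDimensional ℝ 𝔤]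
    -- the inner product ⟨·,·⟩ on 𝔤
    (B : LinearMap.BilinForm ℝ 𝔤)
    (hBsymm : ∀ x y : 𝔤, B x y = B y x)
    (hBpos : ∀ x : 𝔤, x ≠ 0 → 0 < B x x)
    -- 𝔨 is a semisimple Lie subalgebra of 𝔤
    (𝔨 : LieSubalgebra ℝ 𝔤) (hss : LieAlgebra.IsSemisimple ℝ 𝔨)
    -- the orthogonal complement 𝔪 = 𝔨ᗮ has dimension 3
    (hcodim : Module.finrank ℝ ↥((LieSubalgebra.toSubmodule 𝔨).orthogonalBilin B) = 3)
    -- the foliation generated by 𝔨 is conformal with conformality functional ρ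
    (ρ : 𝔨 →ₗ[ℝ] ℝ)
    (hconf : ∀ V : 𝔨, ∀ X Y : 𝔤,
      X ∈ (LieSubalgebra.toSubmodule 𝔨).orthogonalBilin B →
      Y ∈ (LieSubalgebra.toSubmodule 𝔨).orthogonalBilin B →
      B ⁅(V : 𝔤), X⁆ Y + B ⁅(V : 𝔤), Y⁆ X = ρ V * B X Y)
    -- 𝔤 is not perfect
    (hnp : ⁅(⊤ : LieIdeal ℝ 𝔤), (⊤ : LieIdeal ℝ 𝔤)⁆ ≠ ⊤) :
    -- 𝔨 is a Lie ideal of 𝔤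
    ∀ X : 𝔤, ∀ V ∈ 𝔨, ⁅X, V⁆ ∈ 𝔨 := by
  set 𝔪 := (LieSubalgebra.toSubmodule 𝔨).orthogonalBilin B
  have hB : ∀ x, B x x = 0 → x = 0 := fun x hx ↦ by_contra fun h ↦ (hBpos x h).ne' hx
  have hP : IsCompl (𝔨.toLieSubmodule : Submodule ℝ 𝔤) 𝔪 :=
    LinearMap.BilinForm.isCompl_orthogonalBilin hBsymm hB _
  set r := 𝔨.toLieSubmodule.compressedRep hP
  have h𝔨 : IsPerfect ℝ 𝔨 := IsSemisimple.isPerfect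
  have hconf' : ∀ V, IsConformalOn B 𝔪 (ρ V) (r V) := fun V ↦
    IsConformalOn.projection_comp hP (fun n hn y hy ↦ hy n hn) fun X hX Y hY ↦ hconf V X Y hX hY
  have hρ : ρ = 0 := by
    refine 𝔨.eq_zero_of_isConformalOn_compressedRep hP hBsymm hB ?_ h𝔨 hconf'
    rintro h
    rw [h, finrank_bot] at hcodim
    omega
  have hskew : ∀ V, IsConformalOn B 𝔪 0 (r V) := by simpa [hρ] using hconf'
  have hr : r = 0 := by
    by_cases hW : 𝔪 ≤ ⨆ V, LinearMap.range (r V)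
    · exact absurd (𝔨.isPerfect_of_le_iSup_range_compressedRep hP h𝔨 hW) hnp
    · refine 𝔨.compressedRep_eq_zero_of_finrank_le_two hP hB h𝔨 hskew ?_
      have := Submodule.finrank_lt_finrank_of_lt
        (lt_of_le_of_ne (LieSubmodule.iSup_range_compressedRep_le _ hP) fun h ↦ hW h.ge)
      omega
  exact fun X V hV ↦ 𝔨.lie_mem_of_compressedRep_eq_zero hP hr X hV
end
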